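/- Let n ≥ 1 and let H be a connected acyclic simple graph (a tree) on Fin n. Then the real vector space 𝓜(H) of additive no-arbitrage matrices over H has dimension n - 1. -/
import Mathlib


/-- The sum of `E` over the consecutive edge steps of a walk `w` in `G`:
`∑_{i < length w} E v_i v_{i+1}`. -/
def walkSum {V : Type*} {G : SimpleGraph V} (E : V → V → ℝ) {u v : V} (w : G.Walk u v) : ℝ :=
  ∑ i ∈ Finset.range w.length, E (w.getVert i) (w.getVert (i + 1))

/-- `E` is an additive no-arbitrage matrix over `G`: it vanishes on non-adjacent pairs and
its sum over the steps of every closed walk is zero. -/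
def IsNoArbitrage {V : Type*} (G : SimpleGraph V) (E : V → V → ℝ) : Prop :=
  (∀ i j, ¬ G.Adj i j → E i j = 0) ∧ ∀ (v : V) (w : G.Walk v v), walkSum E w = 0


/-- `𝓜(G)`: the subspace of additive no-arbitrage matrices over `G`. -/
def noArbSubmodule {V : Type*} (G : SimpleGraph V) : Submodule ℝ (V → V → ℝ) where
  carrier := {E | IsNoArbitrage G E}
  zero_mem' := ⟨fun _ _ _ => rfl, fun v w => by simp [walkSum]⟩
  add_mem' := by
    rintro E E' ⟨hE0, hEw⟩ ⟨hE'0, hE'w⟩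
    refine ⟨fun i j h => by simp [Pi.add_apply, hE0 i j h, hE'0 i j h], fun v w => ?_⟩
    have : walkSum (E + E') w = walkSum E w + walkSum E' w := by
      simp [walkSum, Finset.sum_add_distrib]
    rw [this, hEw v w, hE'w v w, add_zero]
  smul_mem' := by
    rintro c E ⟨hE0, hEw⟩
    refine ⟨fun i j h => by simp [Pi.smul_apply, hE0 i j h], fun v w => ?_⟩
    have : walkSum (c • E) w = c * walkSum E w := by
      simp [walkSum, Finset.mul_sum]
    rw [this, hEw v w, mul_zero]

section Aux

open SimpleGraph

variable {V : Type*} {G : SimpleGraph V}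

lemma walkSum_nil (E : V → V → ℝ) (u : V) : walkSum E (Walk.nil : G.Walk u u) = 0 := by
  simp [walkSum]

lemma walkSum_cons (E : V → V → ℝ) {u v w : V} (h : G.Adj u v) (p : G.Walk v w) :
    walkSum E (Walk.cons h p) = E u v + walkSum E p := by
  have hgv : ∀ x, (Walk.cons h p).getVert (x + 1) = p.getVert x :=
    fun x => Walk.getVert_cons_succ p h
  rw [walkSum, Walk.length_cons, Finset.sum_range_succ']
  simp only [Nat.add_comm 1, hgv, Walk.getVert_zero]
  rw [add_comm, walkSum]

lemma walkSum_append (E : V → V → ℝ) {u v w : V} (p : G.Walk u v) (q : G.Walk v w) :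
    walkSum E (p.append q) = walkSum E p + walkSum E q := by
  induction p with
  | nil => simp [walkSum_nil]
  | cons h p ih => simp only [Walk.cons_append, walkSum_cons, ih]; ring

lemma walkSum_reverse (E : V → V → ℝ) (hE : ∀ i j, E j i = -E i j) {u v : V}
    (p : G.Walk u v) : walkSum E p.reverse = - walkSum E p := by
  induction p with
  | nil => simp [walkSum_nil]
  | cons h p ih =>
    simp only [Walk.reverse_cons, walkSum_append, ih, walkSum_cons, walkSum_nil]
    rw [hE]
    ring

lemma walkSum_grad (f : V → ℝ) (E : V → V → ℝ)
    (hE : ∀ i j, G.Adj i j → E i j = f j - f i) {u v : V} (p : G.Walk u v) :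
    walkSum E p = f v - f u := by
  have h : ∀ i ∈ Finset.range p.length,
      E (p.getVert i) (p.getVert (i + 1)) = f (p.getVert (i + 1)) - f (p.getVert i) := by
    intro i hi
    exact hE _ _ (p.adj_getVert_succ (Finset.mem_range.mp hi))
  rw [walkSum, Finset.sum_congr rfl h, Finset.sum_range_sub (fun i => f (p.getVert i))]
  simp

end Aux

/-- The space of additive no-arbitrage matrices over a tree on `Fin n`
(`n ≥ 1`) has dimension `n - 1`. -/
theorem finrank_no_arbitrage_tree (n : ℕ) (hn : 1 ≤ n) (H : SimpleGraph (Fin n))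
    (hconn : H.Connected) (hac : H.IsAcyclic) :
    Module.finrank ℝ (noArbSubmodule H) = n - 1 := by
  classical
  open SimpleGraph in
  have v0 : Fin n := ⟨0, hn⟩
  -- the gradient map
  let Φ : (Fin n → ℝ) →ₗ[ℝ] (Fin n → Fin n → ℝ) :=
    { toFun := fun f i j => if H.Adj i j then f j - f i else 0
      map_add' := by
        intro f g; funext i j; by_cases h : H.Adj i j <;> simp [h] <;> ring
      map_smul' := by
        intro c f; funext i j; by_cases h : H.Adj i j <;> simp [h] <;> ring }
  have hΦ : ∀ f i j, Φ f i j = if H.Adj i j then f j - f i else 0 := fun _ _ _ => rfl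
  -- range Φ = 𝓜(H)
  have hrange : LinearMap.range Φ = noArbSubmodule H := by
    apply le_antisymm
    · rintro E ⟨f, rfl⟩
      refine ⟨fun i j h => by simp [hΦ, h], fun v w => ?_⟩
      have := walkSum_grad (G := H) f (Φ f) (fun i j hij => by rw [hΦ, if_pos hij]) w
      simpa [sub_self] using this
    · rintro E ⟨hE0, hEw⟩
      -- antisymmetry
      have hanti : ∀ i j, E j i = -E i j := by
        intro i j
        by_cases h : H.Adj i j
        · have := hEw i (SimpleGraph.Walk.cons h (SimpleGraph.Walk.cons h.symm SimpleGraph.Walk.nil))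
          rw [walkSum_cons, walkSum_cons, walkSum_nil] at this
          linarith
        · rw [hE0 i j h, hE0 j i (fun h' => h h'.symm), neg_zero]
      set f : Fin n → ℝ := fun v => walkSum E (Classical.choice (hconn.preconnected v0 v))
      refine ⟨f, ?_⟩
      funext i j
      rw [hΦ]
      by_cases h : H.Adj i j
      · rw [if_pos h]
        set wi := Classical.choice (hconn.preconnected v0 i)
        set wj := Classical.choice (hconn.preconnected v0 j)
        have hcw := hEw v0 ((wi.append (SimpleGraph.Walk.cons h SimpleGraph.Walk.nil)).append wj.reverse)
        rw [walkSum_append, walkSum_append, walkSum_cons, walkSum_nil,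
          walkSum_reverse E hanti] at hcw
        simp only [f]
        linarith
      · rw [if_neg h, hE0 i j h]
  -- kernel of Φ is the constants
  have hker : LinearMap.ker Φ = Submodule.span ℝ {(fun _ => (1 : ℝ) : Fin n → ℝ)} := by
    apply le_antisymm
    · intro f hf
      have hstep : ∀ i j, H.Adj i j → f j = f i := by
        intro i j hij
        have : Φ f i j = 0 := by rw [LinearMap.mem_ker.mp hf]; rfl
        rw [hΦ, if_pos hij] at this
        linarith
      have hwalk : ∀ (u v : Fin n) (w : H.Walk u v), f v = f u := by
        intro u v w
        induction w with
        | nil => rfl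
        | cons hab p ih => exact ih.trans (hstep _ _ hab)
      refine Submodule.mem_span_singleton.mpr ⟨f v0, ?_⟩
      funext v
      have := hwalk v0 v (Classical.choice (hconn.preconnected v0 v))
      simp [this, mul_comm]
    · rw [Submodule.span_le, Set.singleton_subset_iff]
      refine LinearMap.mem_ker.mpr ?_
      funext i j
      by_cases h : H.Adj i j <;> simp [hΦ, h]
  have hone : (fun _ => (1 : ℝ) : Fin n → ℝ) ≠ 0 := by
    intro h
    have := congrFun h v0
    simpa using this
  have hk1 : Module.finrank ℝ (LinearMap.ker Φ) = 1 := by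
    rw [hker]
    exact finrank_span_singleton hone
  have hrn := LinearMap.finrank_range_add_finrank_ker Φ
  rw [hrange, hk1, Module.finrank_fin_fun] at hrn
  omega
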